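/- Let r ≥ 3 be an integer, let G be a finite simple graph, and let b be a natural number. Then G has a vertex cover of size at most b if and only if there exists a set Y of vertices of G'_r with |Y| ≤ b such that G'_r − Y contains no clique on r vertices (i.e., G'_r − Y is K_r-free). -/

import Mathlib

/-!
An `r`-clique of `G'_r` contains at most `r - 2` new vertices, because two new vertices with the
same index are never adjacent; so it contains two original vertices, and these form an edge of
`G`. Hence a vertex cover of `G`, viewed inside `G'_r`, meets every `r`-clique. Conversely, for
every edge `e = uv` the `r`-clique `{u, v} ∪ D_e` meets `Y`, so sending each vertex of `D_e` to an
endpoint of `e` maps `Y` onto a vertex cover of `G` of size at most `|Y|`.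
-/

/-- The graph `G'_r`, obtained from `G` by replacing each edge by an `r`-clique:
for each edge `e = {u,v}` of `G` add `r - 2` new vertices `D_e` (pairwise disjoint for
distinct edges) and all edges so that `{u, v} ∪ D_e` induces a clique on `r` vertices;
the original edges are kept. -/
def cliqueRep (r : ℕ) {α : Type*} (G : SimpleGraph α) :
    SimpleGraph (α ⊕ (↥G.edgeSet × Fin (r - 2))) :=
  SimpleGraph.fromRel fun x y =>
    match x, y with
    | Sum.inl a, Sum.inl b => G.Adj a b
    | Sum.inl a, Sum.inr (e, _) => a ∈ (e : Sym2 α)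
    | Sum.inr (e, i), Sum.inr (e', i') => e = e' ∧ i ≠ i'
    | _, _ => False

namespace cliqueRep

open Finset SimpleGraph

variable {r : ℕ} {α : Type*} {G : SimpleGraph α}

@[simp]
lemma adj_inl_inl {u v : α} : (cliqueRep r G).Adj (.inl u) (.inl v) ↔ G.Adj u v := by
  simp only [cliqueRep, fromRel_adj, ne_eq, Sum.inl.injEq]
  exact ⟨fun h => h.2.elim id G.adj_symm, fun h => ⟨h.ne, .inl h⟩⟩

@[simp]
lemma adj_inl_inr {a : α} {e : G.edgeSet} {i : Fin (r - 2)} :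
    (cliqueRep r G).Adj (.inl a) (.inr (e, i)) ↔ a ∈ (e : Sym2 α) := by
  simp [cliqueRep]

@[simp]
lemma adj_inr_inr {e e' : G.edgeSet} {i i' : Fin (r - 2)} :
    (cliqueRep r G).Adj (.inr (e, i)) (.inr (e', i')) ↔ e = e' ∧ i ≠ i' := by
  simp only [cliqueRep, fromRel_adj]
  grind

lemma card_toRight_le_of_isClique {s : Finset (α ⊕ (G.edgeSet × Fin (r - 2)))}
    (hs : (cliqueRep r G).IsClique s) : #s.toRight ≤ r - 2 := by
  have hinj : Set.InjOn Prod.snd (s.toRight : Set (G.edgeSet × Fin (r - 2))) := by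
    intro p hp q hq hpq
    by_contra hne
    have hadj := hs (mem_toRight.mp hp) (mem_toRight.mp hq) (by simpa using hne)
    exact (adj_inr_inr.mp hadj).2 hpq
  simpa using
    card_le_card_of_injOn (t := univ) Prod.snd (fun _ _ => mem_coe.mpr (mem_univ _)) hinj

lemma exists_adj_of_isNClique (hr : 2 ≤ r) {s : Finset (α ⊕ (G.edgeSet × Fin (r - 2)))}
    (hs : (cliqueRep r G).IsNClique r s) : ∃ u v, G.Adj u v ∧ .inl u ∈ s ∧ .inl v ∈ s := by
  have hleft : 1 < #s.toLeft := by
    have := card_toRight_le_of_isClique hs.isClique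
    have := hs.card_eq ▸ card_toLeft_add_card_toRight (u := s)
    omega
  obtain ⟨u, hu, v, hv, huv⟩ := one_lt_card.mp hleft
  rw [mem_toLeft] at hu hv
  exact ⟨u, v, adj_inl_inl.mp (hs.isClique hu hv (by simpa using huv)), hu, hv⟩

noncomputable def proj : α ⊕ (G.edgeSet × Fin (r - 2)) → α :=
  Sum.elim id fun p => (p.1 : Sym2 α).out.1

lemma exists_isNClique_proj_mem (hr : 2 ≤ r) {x y : α} (h : G.Adj x y) :
    ∃ s, (cliqueRep r G).IsNClique r s ∧ ∀ z ∈ s, proj z ∈ s(x, y) := by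
  classical
  let e : G.edgeSet := ⟨s(x, y), h⟩
  let block : Finset (α ⊕ (G.edgeSet × Fin (r - 2))) :=
    univ.map ((Function.Embedding.sectR e _).trans .inr)
  have hblock : (cliqueRep r G).IsNClique (r - 2) block := by
    refine ⟨?_, by simp [block]⟩
    simp [block, IsClique, Set.Pairwise]
  refine ⟨insert (.inl x) (insert (.inl y) block), ?_, ?_⟩
  · have hy : ∀ b ∈ block, (cliqueRep r G).Adj (.inl y) b := by simp [block, e]
    have hx : ∀ b ∈ insert (.inl y) block, (cliqueRep r G).Adj (.inl x) b := by
      simpa [block, e] using h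
    have := (hblock.insert hy).insert hx
    rwa [show r - 2 + 1 + 1 = r by omega] at this
  · simpa [block, proj, e] using fun _ => Sym2.out_fst_mem s(x, y)

end cliqueRep

/-- For `r ≥ 3`, a finite graph `G` and `b : ℕ`: `G` has a vertex cover
of size at most `b` iff there is a set `Y` of vertices of `G'_r` with `|Y| ≤ b` such that
`G'_r − Y` is `K_r`-free. -/
theorem stmt_15 (r : ℕ) (hr : 3 ≤ r) {α : Type*} [Fintype α] (G : SimpleGraph α)
    (b : ℕ) :
    (∃ C : Set α, (∀ ⦃x y : α⦄, G.Adj x y → x ∈ C ∨ y ∈ C) ∧ C.ncard ≤ b) ↔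
    (∃ Y : Set (α ⊕ (↥G.edgeSet × Fin (r - 2))),
      Y.ncard ≤ b ∧ ((cliqueRep r G).induce Yᶜ).CliqueFree r) := by
  simp only [SimpleGraph.cliqueFree_induce_iff]
  constructor
  · rintro ⟨C, hC, hCb⟩
    refine ⟨Sum.inl '' C, by rwa [Set.ncard_image_of_injective _ Sum.inl_injective], ?_⟩
    intro s hsY hs
    obtain ⟨u, v, huv, hu, hv⟩ := cliqueRep.exists_adj_of_isNClique (by omega) hs
    rcases hC huv with hu' | hv'
    · exact hsY hu ⟨u, hu', rfl⟩
    · exact hsY hv ⟨v, hv', rfl⟩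
  · rintro ⟨Y, hYb, hY⟩
    refine ⟨cliqueRep.proj '' Y, ?_, (Set.ncard_image_le Y.toFinite).trans hYb⟩
    intro x y hxy
    obtain ⟨s, hs, hproj⟩ := cliqueRep.exists_isNClique_proj_mem (by omega : 2 ≤ r) hxy
    obtain ⟨z, hzs, hzY⟩ : ∃ z ∈ s, z ∈ Y := by
      by_contra! hsY
      exact hY hsY hs
    rcases Sym2.mem_iff.mp (hproj z hzs) with hx | hy
    · exact .inl ⟨z, hzY, hx⟩
    · exact .inr ⟨z, hzY, hy⟩
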